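/- Specializing to d = 2: define (c_1(t), c_2(t)) by c(0) = (0,0) and c(t) = M(x_t)·c(t-1) + η(x_t) where M(α) is the 2×2 matrix with entries μ_{i,j}(α) and η(α) = (η_1(α), η_2(α)). Then c_1(t) and c_2(t) are each computed by a 4-state WFSA over the real semiring (the two automata D_1 and D_2 share all weights and differ only in which state is final). -/

import Mathlib

/-
Summing the path weights over the state reached one step earlier gives the forward recursion
`score q (t+1) = ∑ r, score r t * τ (t+1) r q`. In `D₁, D₂` the states `q1, q4` are entered only
through their weight-`1` self-loops, so their scores are constantly `1`; the recursion for `q2, q3`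
then reads `c(t) = M(x_t) c(t-1) + η(x_t)`, and both sides start at `0`.
-/

/-- Transition weights of the four-state WFSAs `D₁, D₂` (states
`0 = q1, 1 = q2, 2 = q3, 3 = q4`): self-loops of weight `1` on `q1` and `q4`;
`q1 → q2` with weight `η1 a`, `q4 → q3` with weight `η2 a`;
`q2 → q2` weight `μ11 a`, `q2 → q3` weight `μ21 a`, `q3 → q2` weight `μ12 a`,
`q3 → q3` weight `μ22 a`. -/
def dTau {A : Type*} (μ11 μ12 μ21 μ22 η1 η2 : A → ℝ) : Fin 4 → Fin 4 → A → ℝ :=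
  fun q q' a =>
  if q = 0 ∧ q' = 0 then 1
  else if q = 3 ∧ q' = 3 then 1
  else if q = 0 ∧ q' = 1 then η1 a
  else if q = 3 ∧ q' = 2 then η2 a
  else if q = 1 ∧ q' = 1 then μ11 a
  else if q = 1 ∧ q' = 2 then μ21 a
  else if q = 2 ∧ q' = 1 then μ12 a
  else if q = 2 ∧ q' = 2 then μ22 a
  else 0

/-- Initial weights of `D₁, D₂`: `q1` and `q4` are initial with weight `1`. -/
def dLam : Fin 4 → ℝ := fun q => if q = 0 ∨ q = 3 then 1 else 0

/-- Score of the prefix `x_1 … x_t` under the four-state WFSA with transitions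
`dTau`, initial weights `dLam`, and final weight `1` on state `qf`: the sum
over all accepting paths of the product of weights. -/
noncomputable def dScore {A : Type*} (μ11 μ12 μ21 μ22 η1 η2 : A → ℝ)
    (qf : Fin 4) (x : ℕ → A) (t : ℕ) : ℝ :=
  ∑ p : Fin (t + 1) → Fin 4,
    dLam (p 0) *
      (∏ i : Fin t, dTau μ11 μ12 μ21 μ22 η1 η2 (p i.castSucc) (p i.succ) (x (i.1 + 1))) *
      (if p (Fin.last t) = qf then (1 : ℝ) else 0)

namespace WFSA

-- `τ s q q'` is the weight of the transition `q → q'` at step `s ≥ 1`, i.e. on the `s`-th input symbol.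
variable {Q R : Type*} [CommSemiring R] (init : Q → R) (τ : ℕ → Q → Q → R)

def pathWeight (t : ℕ) (p : Fin (t + 1) → Q) : R :=
  init (p 0) * ∏ i : Fin t, τ (i.1 + 1) (p i.castSucc) (p i.succ)

theorem pathWeight_snoc (t : ℕ) (p : Fin (t + 1) → Q) (q : Q) :
    pathWeight init τ (t + 1) (Fin.snoc p q) =
      pathWeight init τ t p * τ (t + 1) (p (Fin.last t)) q := by
  rw [pathWeight, pathWeight, Fin.prod_univ_castSucc, ← Fin.castSucc_zero, Fin.snoc_castSucc,
    Fin.succ_last, Fin.snoc_last, Fin.snoc_castSucc, mul_assoc]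
  simp only [Fin.val_castSucc, Fin.val_last, Fin.snoc_castSucc, ← Fin.castSucc_succ]

variable [Fintype Q] [DecidableEq Q]

def score (q : Q) (t : ℕ) : R :=
  ∑ p : Fin (t + 1) → Q, pathWeight init τ t p * if p (Fin.last t) = q then 1 else 0

theorem score_zero (q : Q) : score init τ q 0 = init q := by
  rw [score, ← (Equiv.funUnique (Fin 1) Q).symm.sum_comp]
  simp [pathWeight]

theorem score_succ (q : Q) (t : ℕ) :
    score init τ q (t + 1) = ∑ r, score init τ r t * τ (t + 1) r q := by
  have last_step : score init τ q (t + 1) =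
      ∑ p : Fin (t + 1) → Q, pathWeight init τ t p * τ (t + 1) (p (Fin.last t)) q := by
    rw [score, ← (Fin.snocEquiv fun _ => Q).sum_comp, Fintype.sum_prod_type]
    simp [Fin.snocEquiv, pathWeight_snoc]
  rw [last_step]
  simp only [score, Finset.sum_mul, mul_assoc, ite_mul, one_mul, zero_mul]
  rw [Finset.sum_comm]
  simp

end WFSA

section TwoDimensional

variable {A : Type*} (μ11 μ12 μ21 μ22 η1 η2 : A → ℝ) (x : ℕ → A)

theorem dScore_eq_score (qf : Fin 4) (t : ℕ) :
    dScore μ11 μ12 μ21 μ22 η1 η2 qf x t =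
      WFSA.score dLam (fun s q q' => dTau μ11 μ12 μ21 μ22 η1 η2 q q' (x s)) qf t :=
  rfl

theorem dScore_zero (qf : Fin 4) : dScore μ11 μ12 μ21 μ22 η1 η2 qf x 0 = dLam qf :=
  (dScore_eq_score μ11 μ12 μ21 μ22 η1 η2 x qf 0).trans (WFSA.score_zero _ _ qf)

theorem dScore_succ (qf : Fin 4) (t : ℕ) :
    dScore μ11 μ12 μ21 μ22 η1 η2 qf x (t + 1) =
      ∑ r, dScore μ11 μ12 μ21 μ22 η1 η2 r x t * dTau μ11 μ12 μ21 μ22 η1 η2 r qf (x (t + 1)) :=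
  (dScore_eq_score μ11 μ12 μ21 μ22 η1 η2 x qf (t + 1)).trans (WFSA.score_succ _ _ qf t)

theorem dScore_q1 (t : ℕ) : dScore μ11 μ12 μ21 μ22 η1 η2 0 x t = 1 := by
  induction t with
  | zero => simp [dScore_zero, dLam]
  | succ t ih => simp [dScore_succ, ih, dTau]

theorem dScore_q4 (t : ℕ) : dScore μ11 μ12 μ21 μ22 η1 η2 3 x t = 1 := by
  induction t with
  | zero => simp [dScore_zero, dLam]
  | succ t ih => simp [dScore_succ, ih, dTau]

theorem dScore_q2_succ (t : ℕ) :
    dScore μ11 μ12 μ21 μ22 η1 η2 1 x (t + 1) =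
      μ11 (x (t + 1)) * dScore μ11 μ12 μ21 μ22 η1 η2 1 x t +
        μ12 (x (t + 1)) * dScore μ11 μ12 μ21 μ22 η1 η2 2 x t + η1 (x (t + 1)) := by
  simp [dScore_succ, Fin.sum_univ_four, dScore_q1, dTau]
  ring

theorem dScore_q3_succ (t : ℕ) :
    dScore μ11 μ12 μ21 μ22 η1 η2 2 x (t + 1) =
      μ21 (x (t + 1)) * dScore μ11 μ12 μ21 μ22 η1 η2 1 x t +
        μ22 (x (t + 1)) * dScore μ11 μ12 μ21 μ22 η1 η2 2 x t + η2 (x (t + 1)) := by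
  simp [dScore_succ, Fin.sum_univ_four, dScore_q4, dTau]
  ring

end TwoDimensional

theorem stmt10_general {A : Type*} (μ11 μ12 μ21 μ22 η1 η2 : A → ℝ)
    (x : ℕ → A) (c1 c2 : ℕ → ℝ)
    (h10 : c1 0 = 0) (h20 : c2 0 = 0)
    (h1 : ∀ t, 1 ≤ t → c1 t = μ11 (x t) * c1 (t - 1) + μ12 (x t) * c2 (t - 1) + η1 (x t))
    (h2 : ∀ t, 1 ≤ t → c2 t = μ21 (x t) * c1 (t - 1) + μ22 (x t) * c2 (t - 1) + η2 (x t)) :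
    ∀ t, c1 t = dScore μ11 μ12 μ21 μ22 η1 η2 1 x t ∧
         c2 t = dScore μ11 μ12 μ21 μ22 η1 η2 2 x t := by
  intro t
  induction t with
  | zero => simp [dScore_zero, dLam, h10, h20]
  | succ t ih =>
    rw [h1 (t + 1) (by omega), h2 (t + 1) (by omega), dScore_q2_succ, dScore_q3_succ,
      Nat.add_sub_cancel, ← ih.1, ← ih.2]
    exact ⟨rfl, rfl⟩

/-- Two-dimensional ISAN: with `c(0) = (0,0)` and
`c(t) = M(x_t)·c(t-1) + η(x_t)` where `M(a)` has entries `μ_{i,j}(a)`, the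
coordinates `c_1(t)` and `c_2(t)` are computed respectively by the 4-state
WFSAs `D₁` (final state `q2`) and `D₂` (final state `q3`), which share all
weights and differ only in the final state. -/
theorem stmt10 {A : Type*} [Fintype A] (μ11 μ12 μ21 μ22 η1 η2 : A → ℝ)
    (x : ℕ → A) (c1 c2 : ℕ → ℝ)
    (h10 : c1 0 = 0) (h20 : c2 0 = 0)
    (h1 : ∀ t, 1 ≤ t → c1 t = μ11 (x t) * c1 (t - 1) + μ12 (x t) * c2 (t - 1) + η1 (x t))
    (h2 : ∀ t, 1 ≤ t → c2 t = μ21 (x t) * c1 (t - 1) + μ22 (x t) * c2 (t - 1) + η2 (x t)) :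
    ∀ t, c1 t = dScore μ11 μ12 μ21 μ22 η1 η2 1 x t ∧
         c2 t = dScore μ11 μ12 μ21 μ22 η1 η2 2 x t :=
  stmt10_general μ11 μ12 μ21 μ22 η1 η2 x c1 c2 h10 h20 h1 h2
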